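/- Let v1, v2, v3 ∈ D2 be orthonormal vectors satisfying v1, v2 ∈ V_{v3}(τ). Then for every vector v ∈ D2 one has ⟨L(v1,v2), L(v,v3)⟩ = 0. -/

import Mathlib

/-! Put `w = K(v₁,v₂)`, which lies in `D₃`. The parallelism identity for `R(e₁,v₃)` applied to
`K(v₁,v₂)` gives `K(v₃,w) + K(v₁,K(v₃,v₂)) + K(v₂,K(v₃,v₁)) = 0`. The identity for `R(v₁,v₃)`
applied to `K(v₃,v₂)`, together with `K(v₃,K(v₃,vᵢ)) = τvᵢ`, gives
`K(v₃,K(v₃,w)) = 2K(v₃,K(v₁,K(v₃,v₂)))`: the value of `τ` is exactly the one that kills the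
`K(v₁,v₂)` term. With the same identity for `v₁, v₂` swapped, applying `K(v₃,·)` to the first
relation yields `K(v₃,K(v₃,w)) = -K(v₃,K(v₃,w))`, hence `|K(v₃,w)|² = ⟨K(v₃,K(v₃,w)),w⟩ = 0` and
`⟨L(v₁,v₂),L(v,v₃)⟩ = ⟨K(v₃,w),v⟩ = 0`. -/

open scoped RealInnerProductSpace
open Module Submodule

noncomputable section

variable {V : Type*} [NormedAddCommGroup V] [InnerProductSpace ℝ V]

/-- The curvature-type operator built from `ε` and the difference tensor `K`:
`R(X,Y)Z = ε(⟨Y,Z⟩X − ⟨X,Z⟩Y) − K(X,K(Y,Z)) + K(Y,K(X,Z))`. -/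
def Rc (ε : ℝ) (K : V →ₗ[ℝ] V →ₗ[ℝ] V) (X Y Z : V) : V :=
  ε • (⟪Y, Z⟫ • X - ⟪X, Z⟫ • Y) - K X (K Y Z) + K Y (K X Z)

/-- The bilinear map `L(v₁,v₂) = K(v₁,v₂) − (λ₁/2)⟨v₁,v₂⟩ e₁`. -/
def Lop (lam1 : ℝ) (e1 : V) (K : V →ₗ[ℝ] V →ₗ[ℝ] V) (v1 v2 : V) : V :=
  K v1 v2 - (lam1 / 2 * ⟪v1, v2⟫) • e1

/-- The distribution `D₂ = {v : v ⟂ e₁, K(e₁,v) = (λ₁/2)v}`. -/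
def D2s (lam1 : ℝ) (e1 : V) (K : V →ₗ[ℝ] V →ₗ[ℝ] V) : Submodule ℝ V :=
  (ℝ ∙ e1)ᗮ ⊓ Module.End.eigenspace (K e1) (lam1 / 2)

/-- The distribution `D₃ = {w : w ⟂ e₁, K(e₁,w) = μw}`. -/
def D3s (mu : ℝ) (e1 : V) (K : V →ₗ[ℝ] V →ₗ[ℝ] V) : Submodule ℝ V :=
  (ℝ ∙ e1)ᗮ ⊓ Module.End.eigenspace (K e1) mu

/-- The operator `P_v(ṽ) = K(v, L(v,ṽ))`, as a linear endomorphism of `V`. -/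
def Pop (lam1 : ℝ) (e1 : V) (K : V →ₗ[ℝ] V →ₗ[ℝ] V) (v : V) : V →ₗ[ℝ] V :=
  (K v) ∘ₗ (K v - (lam1 / 2) •
    ((LinearMap.toSpanSingleton ℝ V e1) ∘ₗ (innerSL ℝ v).toLinearMap))

/-- The eigenspace `V_v(c)` of `P_v` within the orthogonal complement of `v` in `D₂`. -/
def Vvs (lam1 c : ℝ) (e1 : V) (K : V →ₗ[ℝ] V →ₗ[ℝ] V) (v : V) : Submodule ℝ V :=
  D2s lam1 e1 K ⊓ (ℝ ∙ v)ᗮ ⊓ Module.End.eigenspace (Pop lam1 e1 K v) c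

section Identities

variable {ε lam1 c : ℝ} {e1 : V} {K : V →ₗ[ℝ] V →ₗ[ℝ] V}

theorem Rc_eq_of_inner_eq_zero {X Y Z : V} (hXZ : ⟪X, Z⟫ = 0) (hYZ : ⟪Y, Z⟫ = 0) :
    Rc ε K X Y Z = K Y (K X Z) - K X (K Y Z) := by
  simp only [Rc, hXZ, hYZ, zero_smul, sub_zero, smul_zero, zero_sub]
  abel

theorem Rc_self_eq {X Y : V} (hXY : ⟪X, Y⟫ = 0) (hY : ⟪Y, Y⟫ = 1) :
    Rc ε K X Y Y = ε • X - K X (K Y Y) + K Y (K X Y) := by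
  simp only [Rc, hXY, hY, one_smul, zero_smul, sub_zero]

theorem isSymmetric_of_inner_apply_comm (hKcub : ∀ X Y Z : V, ⟪K X Y, Z⟫ = ⟪K X Z, Y⟫)
    (X : V) : (K X).IsSymmetric :=
  fun Y Z => by rw [hKcub, real_inner_comm]

theorem mem_D2s_iff {x : V} :
    x ∈ D2s lam1 e1 K ↔ ⟪e1, x⟫ = 0 ∧ K e1 x = (lam1 / 2) • x := by
  rw [D2s, mem_inf, mem_orthogonal_singleton_iff_inner_right, Module.End.mem_eigenspace_iff]

theorem mem_D3s_iff {x : V} :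
    x ∈ D3s c e1 K ↔ ⟪e1, x⟫ = 0 ∧ K e1 x = c • x := by
  rw [D3s, mem_inf, mem_orthogonal_singleton_iff_inner_right, Module.End.mem_eigenspace_iff]

theorem Pop_apply (v x : V) : Pop lam1 e1 K v x = K v (Lop lam1 e1 K v x) := by
  simp [Pop, Lop, mul_smul]

theorem apply_apply_eq_of_mem_Vvs {v x : V} (hx : x ∈ Vvs lam1 c e1 K v) :
    K v (K v x) = c • x := by
  rw [Vvs, mem_inf, mem_inf, mem_orthogonal_singleton_iff_inner_right,
    Module.End.mem_eigenspace_iff, Pop_apply, Lop] at hx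
  obtain ⟨⟨-, hvx⟩, hPx⟩ := hx
  simpa [hvx] using hPx

/-- `K(e₁,e₁) - λ₁e₁` is orthogonal to `e₁` by the choice of `λ₁`, and to `D₂`, `D₃` because
`K(e₁,·)` is self-adjoint and they consist of its eigenvectors orthogonal to `e₁`. -/
theorem apply_e1_e1_eq_of_sup_eq_top {μ : ℝ} (hKcub : ∀ X Y Z : V, ⟪K X Y, Z⟫ = ⟪K X Z, Y⟫)
    (he1 : ‖e1‖ = 1) (hlam1 : lam1 = ⟪K e1 e1, e1⟫)
    (hsplit : (ℝ ∙ e1) ⊔ D2s lam1 e1 K ⊔ D3s μ e1 K = ⊤) : K e1 e1 = lam1 • e1 := by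
  have hperp : ∀ {r : ℝ} {y : V}, y ∈ (ℝ ∙ e1)ᗮ ⊓ Module.End.eigenspace (K e1) r →
      ⟪y, K e1 e1 - lam1 • e1⟫ = 0 := by
    intro r y hy
    rw [mem_inf, mem_orthogonal_singleton_iff_inner_left, Module.End.mem_eigenspace_iff] at hy
    obtain ⟨hy, hKy⟩ := hy
    rw [inner_sub_right, real_inner_smul_right, real_inner_comm, hKcub, hKy,
      real_inner_smul_left, hy]
    ring
  have hmem : K e1 e1 - lam1 • e1 ∈ ((ℝ ∙ e1) ⊔ D2s lam1 e1 K ⊔ D3s μ e1 K)ᗮ := by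
    rw [← inf_orthogonal, ← inf_orthogonal]
    refine ⟨⟨mem_orthogonal_singleton_iff_inner_right.2 ?_, fun y hy => hperp hy⟩,
      fun y hy => hperp hy⟩
    rw [inner_sub_right, real_inner_smul_right, real_inner_self_eq_norm_sq, he1,
      real_inner_comm, ← hlam1]
    ring
  rwa [hsplit, top_orthogonal_eq_bot, mem_bot, sub_eq_zero] at hmem

end Identities

/-- The pointwise identities of Case `C_m`, with `μ` and `ε` expressed through
`η = √(λ₁² − 4ε)/2`. -/
structure IsCaseC (ε lam1 η μ : ℝ) (e1 : V) (K : V →ₗ[ℝ] V →ₗ[ℝ] V) : Prop where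
  symm : ∀ X Y : V, K X Y = K Y X
  cubic : ∀ X Y Z : V, ⟪K X Y, Z⟫ = ⟪K X Z, Y⟫
  parallel : ∀ X Y Z U : V, Rc ε K X Y (K Z U) = K (Rc ε K X Y Z) U + K Z (Rc ε K X Y U)
  apply_e1_e1 : K e1 e1 = lam1 • e1
  eta_ne_zero : η ≠ 0
  mu_eq : μ = lam1 / 2 - η
  eps_eq : ε = lam1 ^ 2 / 4 - η ^ 2
  Lop_mem : ∀ a ∈ D2s lam1 e1 K, ∀ b ∈ D2s lam1 e1 K, Lop lam1 e1 K a b ∈ D3s μ e1 K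
  apply_mem : ∀ a ∈ D2s lam1 e1 K, ∀ w ∈ D3s μ e1 K, K a w ∈ D2s lam1 e1 K

namespace IsCaseC

variable {ε lam1 η μ : ℝ} {e1 : V} {K : V →ₗ[ℝ] V →ₗ[ℝ] V} (h : IsCaseC ε lam1 η μ e1 K)
  {a b c w : V}
include h

theorem inner_eq_zero_of_mem_D2s_of_mem_D3s (ha : a ∈ D2s lam1 e1 K) (hw : w ∈ D3s μ e1 K) :
    ⟪a, w⟫ = 0 := by
  have hne : lam1 / 2 ≠ μ := by
    rw [h.mu_eq]
    intro H
    exact h.eta_ne_zero (by linarith)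
  exact (isSymmetric_of_inner_apply_comm h.cubic e1).orthogonalFamily_eigenspaces hne
    ⟨a, ha.2⟩ ⟨w, hw.2⟩

theorem apply_mem_D3s (ha : a ∈ D2s lam1 e1 K) (hb : b ∈ D2s lam1 e1 K) (hab : ⟪a, b⟫ = 0) :
    K a b ∈ D3s μ e1 K := by
  simpa [Lop, hab] using h.Lop_mem a ha b hb

theorem Rc_e1_of_mem_D2s (hc : c ∈ D2s lam1 e1 K) (ha : a ∈ D2s lam1 e1 K) (hca : ⟪c, a⟫ = 0) :
    Rc ε K e1 c a = η • K c a := by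
  rw [Rc_eq_of_inner_eq_zero (mem_D2s_iff.1 ha).1 hca, (mem_D2s_iff.1 ha).2,
    (mem_D3s_iff.1 (h.apply_mem_D3s hc ha hca)).2, map_smul, h.mu_eq]
  module

theorem Rc_e1_of_mem_D3s (hc : c ∈ D2s lam1 e1 K) (hw : w ∈ D3s μ e1 K) :
    Rc ε K e1 c w = -η • K c w := by
  rw [Rc_eq_of_inner_eq_zero (mem_D3s_iff.1 hw).1 (h.inner_eq_zero_of_mem_D2s_of_mem_D3s hc hw),
    (mem_D3s_iff.1 hw).2, (mem_D2s_iff.1 (h.apply_mem c hc w hw)).2, map_smul, h.mu_eq]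
  module

theorem Rc_e1_self (hc : c ∈ D2s lam1 e1 K) (hc1 : ⟪c, c⟫ = 1) :
    Rc ε K e1 c c = -η ^ 2 • e1 + η • (K c c - (lam1 / 2) • e1) := by
  have hL := (mem_D3s_iff.1 (h.Lop_mem c hc c hc)).2
  rw [Lop, hc1, mul_one, map_sub, map_smul, h.apply_e1_e1] at hL
  rw [Rc_self_eq (mem_D2s_iff.1 hc).1 hc1, (mem_D2s_iff.1 hc).2, map_smul, h.eps_eq,
    ← sub_add_cancel (K e1 (K c c)) ((lam1 / 2) • lam1 • e1), hL, h.mu_eq]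
  module

theorem cyclic_sum_eq_zero (ha : a ∈ D2s lam1 e1 K) (hb : b ∈ D2s lam1 e1 K)
    (hc : c ∈ D2s lam1 e1 K) (hab : ⟪a, b⟫ = 0) (hca : ⟪c, a⟫ = 0) (hcb : ⟪c, b⟫ = 0) :
    K c (K a b) + K a (K c b) + K b (K c a) = 0 := by
  have hpar := h.parallel e1 c a b
  rw [h.Rc_e1_of_mem_D3s hc (h.apply_mem_D3s ha hb hab), h.Rc_e1_of_mem_D2s hc ha hca,
    h.Rc_e1_of_mem_D2s hc hb hcb, map_smul, LinearMap.smul_apply, map_smul,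
    h.symm (K c a) b] at hpar
  have hη : η • (K c (K a b) + K a (K c b) + K b (K c a)) = 0 := by
    linear_combination (norm := module) -hpar
  exact (smul_eq_zero.1 hη).resolve_left h.eta_ne_zero

theorem apply_apply_self_eq (ha : a ∈ D2s lam1 e1 K) (hc : c ∈ D2s lam1 e1 K)
    (hca : ⟪c, a⟫ = 0) (hc1 : ⟪c, c⟫ = 1) {t : ℝ} (ht : K c (K c a) = t • a) :
    K a (K c c) = (lam1 ^ 2 / 4 + η * lam1 / 2 - 2 * t) • a := by
  have hpar := h.parallel e1 c c a
  rw [h.Rc_e1_of_mem_D3s hc (h.apply_mem_D3s hc ha hca), h.Rc_e1_self hc hc1,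
    h.Rc_e1_of_mem_D2s hc ha hca, map_smul, ht, h.symm _ a] at hpar
  simp only [map_add, map_sub, map_smul, h.symm a e1, (mem_D2s_iff.1 ha).2] at hpar
  have hη : η • (K a (K c c) - (lam1 ^ 2 / 4 + η * lam1 / 2 - 2 * t) • a) = 0 := by
    linear_combination (norm := module) -hpar
  exact sub_eq_zero.1 ((smul_eq_zero.1 hη).resolve_left h.eta_ne_zero)

theorem apply_apply_apply_eq (ha : a ∈ D2s lam1 e1 K) (hb : b ∈ D2s lam1 e1 K)
    (hc : c ∈ D2s lam1 e1 K) (hab : ⟪a, b⟫ = 0) (hca : ⟪c, a⟫ = 0) (hcb : ⟪c, b⟫ = 0)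
    (hc1 : ⟪c, c⟫ = 1) {t : ℝ} (hta : K c (K c a) = t • a) (htb : K c (K c b) = t • b) :
    K c (K c (K a b)) = (2 : ℝ) • K c (K a (K c b)) + (η ^ 2 + η * lam1 / 2 - 4 * t) • K a b := by
  have hcbD3 := h.apply_mem_D3s hc hb hcb
  have hpar := h.parallel a c c b
  rw [Rc_eq_of_inner_eq_zero (h.inner_eq_zero_of_mem_D2s_of_mem_D3s ha hcbD3)
      (h.inner_eq_zero_of_mem_D2s_of_mem_D3s hc hcbD3),
    Rc_self_eq (by rwa [real_inner_comm]) hc1, Rc_eq_of_inner_eq_zero hab hcb, htb,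
    h.apply_apply_self_eq ha hc hca hc1 hta, h.symm a c, hta, h.eps_eq] at hpar
  simp only [map_sub, map_add, map_smul, LinearMap.sub_apply, LinearMap.add_apply,
    LinearMap.smul_apply] at hpar
  linear_combination (norm := module) -hpar

theorem apply_apply_eq_zero (ha : a ∈ D2s lam1 e1 K) (hb : b ∈ D2s lam1 e1 K)
    (hc : c ∈ D2s lam1 e1 K) (hab : ⟪a, b⟫ = 0) (hca : ⟪c, a⟫ = 0) (hcb : ⟪c, b⟫ = 0)
    (hc1 : ⟪c, c⟫ = 1) {t : ℝ} (ht : t = η * (η + lam1 / 2) / 4)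
    (hta : K c (K c a) = t • a) (htb : K c (K c b) = t • b) :
    K c (K a b) = 0 := by
  have hcoef : η ^ 2 + η * lam1 / 2 - 4 * t = 0 := by rw [ht]; ring
  have hp := h.apply_apply_apply_eq ha hb hc hab hca hcb hc1 hta htb
  have hq := h.apply_apply_apply_eq hb ha hc (by rwa [real_inner_comm]) hcb hca hc1 htb hta
  rw [hcoef, zero_smul, add_zero] at hp hq
  rw [h.symm b a] at hq
  have hcyc := congrArg (K c) (h.cyclic_sum_eq_zero ha hb hc hab hca hcb)
  rw [map_add, map_add, map_zero] at hcyc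
  have hKK : K c (K c (K a b)) = 0 := by
    linear_combination (norm := module) (1 / 2 : ℝ) • hcyc + (1 / 4 : ℝ) • hp + (1 / 4 : ℝ) • hq
  rw [← inner_self_eq_zero (𝕜 := ℝ), h.cubic, hKK, inner_zero_left]

end IsCaseC

theorem stmt_13_general {V : Type*} [NormedAddCommGroup V] [InnerProductSpace ℝ V]
    (ε : ℝ)
    (K : V →ₗ[ℝ] V →ₗ[ℝ] V)
    (hKsymm : ∀ X Y : V, K X Y = K Y X)
    (hKcub : ∀ X Y Z : V, ⟪K X Y, Z⟫ = ⟪K X Z, Y⟫)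
    (hpar : ∀ X Y Z U : V,
      Rc ε K X Y (K Z U) = K (Rc ε K X Y Z) U + K Z (Rc ε K X Y U))
    (e1 : V) (he1 : ‖e1‖ = 1)
    (lam1 η μ τ : ℝ)
    (hlam1 : lam1 = ⟪K e1 e1, e1⟫)
    (hdisc : 0 < lam1 ^ 2 - 4 * ε)
    (hη : η = Real.sqrt (lam1 ^ 2 - 4 * ε) / 2)
    (hμ : μ = (lam1 - Real.sqrt (lam1 ^ 2 - 4 * ε)) / 2)
    (hτ : τ = η * (η + lam1 / 2) / 4)
    (hsplit : (ℝ ∙ e1) ⊔ D2s lam1 e1 K ⊔ D3s μ e1 K = ⊤)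
    (hLD3 : ∀ v1 ∈ D2s lam1 e1 K, ∀ v2 ∈ D2s lam1 e1 K,
      Lop lam1 e1 K v1 v2 ∈ D3s μ e1 K)
    (hKD2 : ∀ v ∈ D2s lam1 e1 K, ∀ w ∈ D3s μ e1 K, K v w ∈ D2s lam1 e1 K)
    (v1 v2 v3 : V) (hv1 : v1 ∈ D2s lam1 e1 K) (hv2 : v2 ∈ D2s lam1 e1 K)
    (hv3 : v3 ∈ D2s lam1 e1 K) (hON : Orthonormal ℝ ![v1, v2, v3])
    (hv1τ : v1 ∈ Vvs lam1 τ e1 K v3) (hv2τ : v2 ∈ Vvs lam1 τ e1 K v3) :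
    ∀ v ∈ D2s lam1 e1 K, ⟪Lop lam1 e1 K v1 v2, Lop lam1 e1 K v v3⟫ = 0 := by
  intro v _
  have hC : IsCaseC ε lam1 η μ e1 K :=
    { symm := hKsymm, cubic := hKcub, parallel := hpar
      apply_e1_e1 := apply_e1_e1_eq_of_sup_eq_top hKcub he1 hlam1 hsplit
      eta_ne_zero := by rw [hη]; exact (div_pos (Real.sqrt_pos.2 hdisc) two_pos).ne'
      mu_eq := by rw [hμ, hη]; ring
      eps_eq := by rw [hη, div_pow, Real.sq_sqrt hdisc.le]; ring
      Lop_mem := hLD3, apply_mem := hKD2 }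
  have h12 : ⟪v1, v2⟫ = 0 := by simpa using hON.2 (show (0 : Fin 3) ≠ 1 by decide)
  have h31 : ⟪v3, v1⟫ = 0 := by simpa using hON.2 (show (2 : Fin 3) ≠ 0 by decide)
  have h32 : ⟪v3, v2⟫ = 0 := by simpa using hON.2 (show (2 : Fin 3) ≠ 1 by decide)
  have h33 : ⟪v3, v3⟫ = 1 := by
    rw [real_inner_self_eq_norm_sq, show ‖v3‖ = 1 by simpa using hON.1 2, one_pow]
  have hK : K v3 (K v1 v2) = 0 := hC.apply_apply_eq_zero hv1 hv2 hv3 h12 h31 h32 h33 hτ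
    (apply_apply_eq_of_mem_Vvs hv1τ) (apply_apply_eq_of_mem_Vvs hv2τ)
  have he1w : ⟪K v1 v2, e1⟫ = 0 := by
    rw [real_inner_comm]; exact (mem_D3s_iff.1 (hC.apply_mem_D3s hv1 hv2 h12)).1
  calc ⟪Lop lam1 e1 K v1 v2, Lop lam1 e1 K v v3⟫
      = ⟪K v1 v2, K v v3⟫ - (lam1 / 2 * ⟪v, v3⟫) * ⟪K v1 v2, e1⟫ := by
        rw [Lop, Lop, h12, mul_zero, zero_smul, sub_zero, inner_sub_right,
          real_inner_smul_right]
    _ = ⟪K v3 (K v1 v2), v⟫ := by rw [he1w, mul_zero, sub_zero, real_inner_comm, hKsymm v, hKcub]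
    _ = 0 := by rw [hK, inner_zero_left]

/-- Lemma 4.11: if `v₁, v₂, v₃ ∈ D₂` are orthonormal with `v₁, v₂ ∈ V_{v₃}(τ)`, then
`⟨L(v₁,v₂), L(v,v₃)⟩ = 0` for every `v ∈ D₂`. -/
theorem stmt_13 {V : Type*} [NormedAddCommGroup V] [InnerProductSpace ℝ V]
    (n m : ℕ) (hn : finrank ℝ V = n) (hn2 : 2 ≤ n)
    (ε : ℝ) (hε : ε = 1 ∨ ε = -1)
    (K : V →ₗ[ℝ] V →ₗ[ℝ] V)
    (hKsymm : ∀ X Y : V, K X Y = K Y X)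
    (hKcub : ∀ X Y Z : V, ⟪K X Y, Z⟫ = ⟪K X Z, Y⟫)
    (hpar : ∀ X Y Z U : V,
      Rc ε K X Y (K Z U) = K (Rc ε K X Y Z) U + K Z (Rc ε K X Y U))
    (e1 : V) (he1 : ‖e1‖ = 1)
    (lam1 η μ τ : ℝ)
    (hlam1 : lam1 = ⟪K e1 e1, e1⟫) (hlam1pos : 0 < lam1)
    (hmax : ∀ u : V, ‖u‖ = 1 → ⟪K u u, u⟫ ≤ lam1)
    (hdisc : 0 < lam1 ^ 2 - 4 * ε)
    (hη : η = Real.sqrt (lam1 ^ 2 - 4 * ε) / 2)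
    (hμ : μ = (lam1 - Real.sqrt (lam1 ^ 2 - 4 * ε)) / 2)
    (hτ : τ = η * (η + lam1 / 2) / 4)
    (hm2 : 2 ≤ m) (hmn : m ≤ n - 1)
    (hdimD2 : finrank ℝ (D2s lam1 e1 K) = m - 1)
    (hsplit : (ℝ ∙ e1) ⊔ D2s lam1 e1 K ⊔ D3s μ e1 K = ⊤)
    (hLD3 : ∀ v1 ∈ D2s lam1 e1 K, ∀ v2 ∈ D2s lam1 e1 K,
      Lop lam1 e1 K v1 v2 ∈ D3s μ e1 K)
    (hKD2 : ∀ v ∈ D2s lam1 e1 K, ∀ w ∈ D3s μ e1 K, K v w ∈ D2s lam1 e1 K)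
    (v1 v2 v3 : V) (hv1 : v1 ∈ D2s lam1 e1 K) (hv2 : v2 ∈ D2s lam1 e1 K)
    (hv3 : v3 ∈ D2s lam1 e1 K) (hON : Orthonormal ℝ ![v1, v2, v3])
    (hv1τ : v1 ∈ Vvs lam1 τ e1 K v3) (hv2τ : v2 ∈ Vvs lam1 τ e1 K v3) :
    ∀ v ∈ D2s lam1 e1 K, ⟪Lop lam1 e1 K v1 v2, Lop lam1 e1 K v v3⟫ = 0 :=
  stmt_13_general ε K hKsymm hKcub hpar e1 he1 lam1 η μ τ hlam1 hdisc hη hμ hτ hsplit hLD3 hKD2 v1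
    v2 v3 hv1 hv2 hv3 hON hv1τ hv2τ

end
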